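/- Let H be a subgroup of a finite group G containing a pronormal subgroup S of G. Then H is pronormal in G if and only if for every g ∈ N_G(S), the subgroups H and H^g are conjugate by an element of ⟨H, H^g⟩. -/

import Mathlib

/-!
Given `g`, pronormality of `S` gives `x ∈ ⟨S, S^g⟩ ≤ ⟨H, H^g⟩` with `S^x = S^g`, so `n = g x⁻¹`
normalizes `S`. The hypothesis at `n` gives `y ∈ ⟨H, H^n⟩` with `H^y = H^n`; since `H^n` is
the conjugate of `H^g` by `x⁻¹ ∈ ⟨H, H^g⟩`, also `y ∈ ⟨H, H^g⟩`, and `yx` conjugates `H` to `H^g`.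
-/

open Pointwise

/-- `conjSub H g` is the conjugate subgroup `H^g = g⁻¹Hg`. -/
def conjSub {G : Type*} [Group G] (H : Subgroup G) (g : G) : Subgroup G :=
  MulAut.conj g⁻¹ • H

/-- `H` is pronormal: for every `g`, `H` and `H^g` are conjugate in `⟨H, H^g⟩`. -/
def IsPronormal {G : Type*} [Group G] (H : Subgroup G) : Prop :=
  ∀ g : G, ∃ x ∈ H ⊔ conjSub H g, conjSub H x = conjSub H g

namespace Subgroup

variable {G : Type*} [Group G]

lemma mem_conjSub {H : Subgroup G} {g a : G} : a ∈ conjSub H g ↔ g * a * g⁻¹ ∈ H := by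
  simp [conjSub, mem_pointwise_smul_iff_inv_smul_mem, mul_assoc]

lemma conjSub_conjSub (H : Subgroup G) (g g' : G) :
    conjSub (conjSub H g) g' = conjSub H (g * g') := by
  ext a
  simp [mem_conjSub, mul_assoc]

lemma conjSub_one (H : Subgroup G) : conjSub H 1 = H := by
  ext a
  simp [mem_conjSub]

lemma conjSub_mono {H K : Subgroup G} (h : H ≤ K) (g : G) : conjSub H g ≤ conjSub K g :=
  fun _ ha => mem_conjSub.mpr (h (mem_conjSub.mp ha))

lemma conjSub_le_of_mem {H K : Subgroup G} {x : G} (hHK : H ≤ K) (hx : x ∈ K) :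
    conjSub H x ≤ K := by
  intro a ha
  have hxa : x * a * x⁻¹ ∈ K := hHK (mem_conjSub.mp ha)
  simpa [mul_assoc] using K.mul_mem (K.mul_mem (K.inv_mem hx) hxa) hx

lemma mem_normalizer_iff_conjSub_eq {S : Subgroup G} {n : G} :
    n ∈ normalizer (S : Set G) ↔ conjSub S n = S := by
  simp only [mem_normalizer_iff, SetLike.ext_iff, mem_conjSub, Iff.comm]

lemma mul_inv_mem_normalizer_of_conjSub_eq {S : Subgroup G} {g x : G}
    (h : conjSub S x = conjSub S g) : g * x⁻¹ ∈ normalizer (S : Set G) := by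
  rw [mem_normalizer_iff_conjSub_eq, ← conjSub_conjSub, ← h, conjSub_conjSub, mul_inv_cancel,
    conjSub_one]

lemma sup_conjSub_mul_inv_le {H : Subgroup G} {g x : G} (hx : x ∈ H ⊔ conjSub H g) :
    H ⊔ conjSub H (g * x⁻¹) ≤ H ⊔ conjSub H g := by
  rw [← conjSub_conjSub]
  exact sup_le le_sup_left (conjSub_le_of_mem le_sup_right (inv_mem hx))

end Subgroup

open Subgroup in
theorem stmt_1_general {G : Type*} [Group G] (S H : Subgroup G)
    (hSH : S ≤ H) (hS : IsPronormal S) :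
    IsPronormal H ↔
      ∀ g ∈ Subgroup.normalizer (S : Set G), ∃ x ∈ H ⊔ conjSub H g, conjSub H x = conjSub H g := by
  refine ⟨fun hH g _ => hH g, fun hN g => ?_⟩
  obtain ⟨x, hx, hSx⟩ := hS g
  have hxH : x ∈ H ⊔ conjSub H g := sup_le_sup hSH (conjSub_mono hSH g) hx
  obtain ⟨y, hy, hHy⟩ := hN (g * x⁻¹) (mul_inv_mem_normalizer_of_conjSub_eq hSx)
  refine ⟨y * x, mul_mem (sup_conjSub_mul_inv_le hxH hy) hxH, ?_⟩
  rw [← conjSub_conjSub, hHy, conjSub_conjSub, inv_mul_cancel_right]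

theorem stmt_1 {G : Type*} [Group G] [Finite G] (S H : Subgroup G)
    (hSH : S ≤ H) (hS : IsPronormal S) :
    IsPronormal H ↔
      ∀ g ∈ Subgroup.normalizer (S : Set G), ∃ x ∈ H ⊔ conjSub H g, conjSub H x = conjSub H g :=
  stmt_1_general S H hSH hS
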